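/- arXiv:1703.09914 — 2 statements merged into one kernel-verified Lean document; each statement's English description precedes it below -/
import Mathlib

section
/- With q = 2/(1 − ln 2) and q_k(θ) = (2 + k^{-1}(2^{-2k+1} − 2)cos(kθ))/(1 − ln 2 + k^{-2}(2^{-2k} + 1)cos(kθ)), there exist constants c, C > 0 and K such that for all k ≥ K, c/k ≤ ‖q − q_k‖_{L²(0,2π)} ≤ C/k; in particular ‖q − q_k‖_{L²} = Θ(k^{-1}) and does not decay exponentially. -/
open Real
set_option maxHeartbeats 1000000 in

/-- The `L²(0,2π)` distance between `q = 2/(1 - ln 2)` and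
`q_k(θ) = (2 + k^{-1}(2^{-2k+1} - 2) cos(kθ)) / (1 - ln 2 + k^{-2}(2^{-2k} + 1) cos(kθ))`
is of exact order `k^{-1}`: there are `c, C > 0` and `K` with
`c/k ≤ ‖q - q_k‖_{L²(0,2π)} ≤ C/k` for every `k ≥ K`. -/
theorem stmt9 :
    ∃ c C : ℝ, 0 < c ∧ 0 < C ∧ ∃ K : ℕ, ∀ k : ℕ, K ≤ k →
      c / k ≤
        Real.sqrt (∫ θ in (0:ℝ)..(2 * π),
          (2 / (1 - Real.log 2) -
            (2 + (k:ℝ)⁻¹ * (2 * ((2:ℝ) ^ (2 * k))⁻¹ - 2) * Real.cos (k * θ)) /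
              (1 - Real.log 2 + ((k:ℝ) ^ 2)⁻¹ * (((2:ℝ) ^ (2 * k))⁻¹ + 1) * Real.cos (k * θ))) ^ 2)
      ∧
      Real.sqrt (∫ θ in (0:ℝ)..(2 * π),
          (2 / (1 - Real.log 2) -
            (2 + (k:ℝ)⁻¹ * (2 * ((2:ℝ) ^ (2 * k))⁻¹ - 2) * Real.cos (k * θ)) /
              (1 - Real.log 2 + ((k:ℝ) ^ 2)⁻¹ * (((2:ℝ) ^ (2 * k))⁻¹ + 1) * Real.cos (k * θ))) ^ 2)
        ≤ C / k := by
  have hπ3 : (3:ℝ) < π := Real.pi_gt_three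
  have hπ4 : π ≤ 4 := Real.pi_le_four
  have hlog1 : Real.log 2 < (7/10 : ℝ) := by
    have := Real.log_two_lt_d9; norm_num at this ⊢; linarith
  have hlog2 : (3/5:ℝ) < Real.log 2 := by
    have := Real.log_two_gt_d9; norm_num at this ⊢; linarith
  have ha1 : (3/10:ℝ) < 1 - Real.log 2 := by linarith
  have ha2 : 1 - Real.log 2 < (2/5 : ℝ) := by linarith
  refine ⟨1, 70, one_pos, by norm_num, 4, fun k hk => ?_⟩
  set a : ℝ := 1 - Real.log 2 with ha_def
  have hkr4 : (4:ℝ) ≤ (k:ℝ) := by exact_mod_cast hk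
  have hkr0 : (0:ℝ) < (k:ℝ) := by linarith
  have hk2 : (16:ℝ) ≤ (k:ℝ)^2 := by nlinarith
  set b : ℝ := ((2:ℝ)^(2*k))⁻¹ with hb_def
  have hb0 : 0 < b := by rw [hb_def]; positivity
  clear_value a
  have hb1 : b ≤ 1/2 := by
    rw [hb_def]
    have h2 : (2:ℝ) ≤ 2^(2*k) := by
      calc (2:ℝ) = 2^1 := (pow_one 2).symm
      _ ≤ 2^(2*k) := by
        apply pow_le_pow_right₀ (by norm_num)
        omega
    rw [show (1:ℝ)/2 = (2:ℝ)⁻¹ by norm_num]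
    exact inv_anti₀ (by norm_num) h2
  have h16 : ((k:ℝ)^2)⁻¹ ≤ 1/16 := by
    rw [inv_eq_one_div]
    exact one_div_le_one_div_of_le (by norm_num) hk2
  have hk2pos : (0:ℝ) < (k:ℝ)^2 := by positivity
  clear_value b
  -- pointwise bounds on the denominator
  have hD : ∀ θ : ℝ, (7/40 : ℝ) ≤ a + ((k:ℝ)^2)⁻¹ * (b+1) * Real.cos ((k:ℝ)*θ) ∧
      a + ((k:ℝ)^2)⁻¹ * (b+1) * Real.cos ((k:ℝ)*θ) ≤ (21/40 : ℝ) := by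
    intro θ
    have hc1 : Real.cos ((k:ℝ)*θ) ≤ 1 := Real.cos_le_one _
    have hc2 : -1 ≤ Real.cos ((k:ℝ)*θ) := Real.neg_one_le_cos _
    have hm0 : (0:ℝ) ≤ ((k:ℝ)^2)⁻¹ * (b+1) :=
      mul_nonneg (by positivity) (by linarith)
    have hm1 : ((k:ℝ)^2)⁻¹ * (b+1) ≤ 3/32 := by nlinarith
    constructor
    · nlinarith [mul_nonneg hm0 (by linarith : (0:ℝ) ≤ 1 + Real.cos ((k:ℝ)*θ))]
    · nlinarith [mul_nonneg hm0 (by linarith : (0:ℝ) ≤ 1 - Real.cos ((k:ℝ)*θ))]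
  set γ : ℝ := 2*(b+1)/(k:ℝ) + a*(2 - 2*b) with hγ_def
  clear_value γ
  have hγ1 : (3/10:ℝ) ≤ γ := by
    rw [hγ_def]
    have h1 : (0:ℝ) ≤ 2*(b+1)/(k:ℝ) := div_nonneg (by linarith) (by linarith)
    nlinarith
  have hγ2 : γ ≤ (8/5 : ℝ) := by
    rw [hγ_def]
    have h1 : 2*(b+1)/(k:ℝ) ≤ 3/4 := by
      rw [div_le_iff₀ hkr0]; nlinarith
    nlinarith
  -- pointwise bounds on the squared difference
  have key : ∀ θ : ℝ,
      Real.cos ((k:ℝ)*θ)^2 / (k:ℝ)^2 ≤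
        (2 / a - (2 + (k:ℝ)⁻¹ * (2 * b - 2) * Real.cos ((k:ℝ) * θ)) /
          (a + ((k:ℝ) ^ 2)⁻¹ * (b + 1) * Real.cos ((k:ℝ) * θ))) ^ 2 ∧
      (2 / a - (2 + (k:ℝ)⁻¹ * (2 * b - 2) * Real.cos ((k:ℝ) * θ)) /
          (a + ((k:ℝ) ^ 2)⁻¹ * (b + 1) * Real.cos ((k:ℝ) * θ))) ^ 2 ≤
        1225 * (Real.cos ((k:ℝ)*θ)^2 / (k:ℝ)^2) := by
    intro θ
    obtain ⟨hD1, hD2⟩ := hD θ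
    set c0 : ℝ := Real.cos ((k:ℝ)*θ) with hc0_def
    set D : ℝ := a + ((k:ℝ)^2)⁻¹ * (b+1) * c0 with hD_def
    clear_value c0 D
    have hDpos : (0:ℝ) < D := by linarith
    have hapos : (0:ℝ) < a := by linarith
    have hP1 : (1/20:ℝ) ≤ a * D := by nlinarith
    have hP2 : a * D ≤ (21/100 : ℝ) := by nlinarith
    have hPpos : (0:ℝ) < a * D := by linarith
    have hkne : ((k:ℝ)) ≠ 0 := ne_of_gt hkr0
    have hstep : 2 / a - (2 + (k:ℝ)⁻¹ * (2 * b - 2) * c0) / D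
        = (2*D - a*(2 + (k:ℝ)⁻¹ * (2 * b - 2) * c0))/(a*D) :=
      div_sub_div 2 _ (ne_of_gt hapos) (ne_of_gt hDpos)
    have hnum : 2*D - a*(2 + (k:ℝ)⁻¹ * (2 * b - 2) * c0) = γ*c0/(k:ℝ) := by
      rw [hγ_def, hD_def]
      field_simp
      ring
    have hE : 2 / a - (2 + (k:ℝ)⁻¹ * (2 * b - 2) * c0) / D
        = (γ / (a * D)) * (c0 / (k:ℝ)) := by
      rw [hstep, hnum, div_div, div_mul_div_comm, mul_comm ((k:ℝ)) (a*D)]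
    rw [hE]
    have hR1 : (1:ℝ) ≤ γ / (a * D) := by
      rw [le_div_iff₀ hPpos]; linarith
    have hR2 : γ / (a * D) ≤ 35 := by
      rw [div_le_iff₀ hPpos]; linarith
    have hsq : c0^2 / (k:ℝ)^2 = (c0 / (k:ℝ))^2 := (div_pow c0 _ 2).symm
    rw [hsq, mul_pow]
    have hRR1 : 1 ≤ (γ / (a * D))^2 := by nlinarith
    have hRR2 : (γ / (a * D))^2 ≤ 1225 := by nlinarith
    constructor
    · exact le_mul_of_one_le_left (sq_nonneg _) hRR1
    · exact mul_le_mul_of_nonneg_right hRR2 (sq_nonneg _)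
  -- the basic cosine integral
  have hkne : ((k:ℝ)) ≠ 0 := ne_of_gt hkr0
  have hcos_int : (∫ θ in (0:ℝ)..(2*π), Real.cos ((k:ℝ)*θ)^2) = π := by
    rw [intervalIntegral.integral_comp_mul_left (fun x => Real.cos x ^ 2) hkne]
    rw [integral_cos_sq]
    have h2kπ : (k:ℝ) * (2*π) = ((2*k : ℕ):ℝ) * π := by push_cast; ring
    rw [h2kπ, Real.sin_nat_mul_pi]
    simp only [mul_zero, Real.sin_zero, Real.cos_zero, smul_eq_mul]
    push_cast
    field_simp
    ring
  -- continuity and integrability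
  have hcontD : Continuous (fun θ : ℝ => a + ((k:ℝ)^2)⁻¹ * (b+1) * Real.cos ((k:ℝ)*θ)) := by
    fun_prop
  have hcont : Continuous (fun θ : ℝ =>
      (2 / a - (2 + (k:ℝ)⁻¹ * (2 * b - 2) * Real.cos ((k:ℝ) * θ)) /
        (a + ((k:ℝ) ^ 2)⁻¹ * (b + 1) * Real.cos ((k:ℝ) * θ))) ^ 2) := by
    apply Continuous.pow
    apply Continuous.sub continuous_const
    apply Continuous.div (by fun_prop) hcontD
    intro θ
    have := (hD θ).1
    intro h
    rw [h] at this
    norm_num at this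
  have hintF : IntervalIntegrable (fun θ : ℝ =>
      (2 / a - (2 + (k:ℝ)⁻¹ * (2 * b - 2) * Real.cos ((k:ℝ) * θ)) /
        (a + ((k:ℝ) ^ 2)⁻¹ * (b + 1) * Real.cos ((k:ℝ) * θ))) ^ 2)
      MeasureTheory.volume 0 (2*π) := hcont.intervalIntegrable _ _
  have hintg1 : IntervalIntegrable (fun θ : ℝ => Real.cos ((k:ℝ)*θ)^2 / (k:ℝ)^2)
      MeasureTheory.volume 0 (2*π) := by
    apply Continuous.intervalIntegrable; fun_prop
  have hintg2 : IntervalIntegrable (fun θ : ℝ => 1225 * (Real.cos ((k:ℝ)*θ)^2 / (k:ℝ)^2))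
      MeasureTheory.volume 0 (2*π) := by
    apply Continuous.intervalIntegrable; fun_prop
  have hg1 : (∫ θ in (0:ℝ)..(2*π), Real.cos ((k:ℝ)*θ)^2 / (k:ℝ)^2) = π / (k:ℝ)^2 := by
    rw [intervalIntegral.integral_div, hcos_int]
  have hg2 : (∫ θ in (0:ℝ)..(2*π), 1225 * (Real.cos ((k:ℝ)*θ)^2 / (k:ℝ)^2))
      = 1225 * (π / (k:ℝ)^2) := by
    rw [intervalIntegral.integral_const_mul, hg1]
  have h2π : (0:ℝ) ≤ 2*π := by linarith
  have hIlow : π / (k:ℝ)^2 ≤ ∫ θ in (0:ℝ)..(2*π),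
      (2 / a - (2 + (k:ℝ)⁻¹ * (2 * b - 2) * Real.cos ((k:ℝ) * θ)) /
        (a + ((k:ℝ) ^ 2)⁻¹ * (b + 1) * Real.cos ((k:ℝ) * θ))) ^ 2 := by
    rw [← hg1]
    exact intervalIntegral.integral_mono_on h2π hintg1 hintF (fun θ _ => (key θ).1)
  have hIhigh : (∫ θ in (0:ℝ)..(2*π),
      (2 / a - (2 + (k:ℝ)⁻¹ * (2 * b - 2) * Real.cos ((k:ℝ) * θ)) /
        (a + ((k:ℝ) ^ 2)⁻¹ * (b + 1) * Real.cos ((k:ℝ) * θ))) ^ 2) ≤ 1225 * (π / (k:ℝ)^2) := by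
    rw [← hg2]
    exact intervalIntegral.integral_mono_on h2π hintF hintg2 (fun θ _ => (key θ).2)
  constructor
  · apply Real.le_sqrt_of_sq_le
    calc (1 / (k:ℝ))^2 = 1 / (k:ℝ)^2 := by rw [div_pow]; norm_num
    _ ≤ π / (k:ℝ)^2 := by gcongr; linarith
    _ ≤ _ := hIlow
  · rw [show (70:ℝ)/(k:ℝ) = Real.sqrt ((70/(k:ℝ))^2) from (Real.sqrt_sq (by positivity)).symm]
    apply Real.sqrt_le_sqrt
    calc _ ≤ 1225 * (π / (k:ℝ)^2) := hIhigh
    _ ≤ (70 / (k:ℝ))^2 := by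
      rw [div_pow, ← mul_div_assoc]
      gcongr
      nlinarith
end

section
/- There is no constant C > 0 such that ‖q − q_k‖_{L²(Γ₁)} ≤ C ‖u − u_k‖_{L²(Γ₂)} for all k ≥ 1, where q, q_k, u, u_k are as in the annulus counterexample. Hence Lipschitz stability fails for recovering the Robin coefficient from Dirichlet boundary data in this setting. -/
/-!
On `Γ₁` the coefficient difference is `q - q_k = e_k cos(kθ) / (1 - log 2 + d_k cos(kθ))` with
`e_k ≥ 1/k` and a denominator in `(0, 2]`, so `‖q - q_k‖ ≥ √π / (2k)`, whereas
`‖u - u_k‖ = 2√π / (2^k k²)`. The ratio `‖q - q_k‖ / ‖u - u_k‖ ≥ 2^k k / 4` is unbounded.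
-/

open Real

/-- The difference `q - q_k` of the Robin coefficients, as a function of the
angle `θ` on the inner circle `Γ₁ = {|x| = 1/2}`. -/
noncomputable def qDiff (k : ℕ) (θ : ℝ) : ℝ :=
  2 / (1 - Real.log 2) -
    (2 + (k:ℝ)⁻¹ * (2 * ((2:ℝ) ^ (2 * k))⁻¹ - 2) * Real.cos (k * θ)) /
      (1 - Real.log 2 + ((k:ℝ) ^ 2)⁻¹ * (((2:ℝ) ^ (2 * k))⁻¹ + 1) * Real.cos (k * θ))

/-- The difference `u - u_k` of the solutions, restricted to the outer
circle `Γ₂ = {|x| = 1}`, as a function of the angle `θ`. -/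
noncomputable def uDiff (k : ℕ) (θ : ℝ) : ℝ :=
  -(((2:ℝ) ^ k)⁻¹ * ((k:ℝ) ^ 2)⁻¹ * 2 * Real.cos (k * θ))

lemma integral_cos_nat_mul_sq {k : ℕ} (hk : k ≠ 0) :
    ∫ θ in (0:ℝ)..(2 * π), cos (k * θ) ^ 2 = π := by
  have hk0 : (k:ℝ) ≠ 0 := Nat.cast_ne_zero.2 hk
  have hsin : sin (k * (2 * π)) = 0 := by
    simpa [mul_left_comm, mul_assoc] using sin_nat_mul_pi (2 * k)
  rw [intervalIntegral.integral_comp_mul_left (fun x => cos x ^ 2) hk0, integral_cos_sq, hsin]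
  simp
  field_simp

lemma sqrt_integral_const_mul_cos_sq {k : ℕ} (hk : k ≠ 0) (a : ℝ) :
    √(∫ θ in (0:ℝ)..(2 * π), (a * cos (k * θ)) ^ 2) = |a| * √π := by
  simp_rw [mul_pow]
  rw [intervalIntegral.integral_const_mul, integral_cos_nat_mul_sq hk, sqrt_mul (sq_nonneg a),
    sqrt_sq_eq_abs]

lemma abs_mul_sqrt_pi_le_sqrt_integral_sq {f : ℝ → ℝ} (hf : Continuous f) {k : ℕ} (hk : k ≠ 0)
    {a : ℝ} (h : ∀ θ, |a * cos (k * θ)| ≤ |f θ|) :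
    |a| * √π ≤ √(∫ θ in (0:ℝ)..(2 * π), f θ ^ 2) := by
  rw [← sqrt_integral_const_mul_cos_sq hk]
  refine sqrt_le_sqrt (intervalIntegral.integral_mono_on (by positivity) ?_ ?_ ?_)
  · exact (by fun_prop : Continuous fun θ => (a * cos (k * θ)) ^ 2).intervalIntegrable _ _
  · exact (hf.pow 2).intervalIntegrable _ _
  · exact fun θ _ => sq_le_sq.2 (h θ)

lemma abs_half_mul_le_abs_robin_diff {D d b c e : ℝ} (hD : 0 < D) (hden : 0 < D + d * c)
    (hden2 : D + d * c ≤ 2) (hd : 0 ≤ d) (he : 0 ≤ e) (heb : e ≤ -b) :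
    |e / 2 * c| ≤ |2 / D - (2 + b * c) / (D + d * c)| := by
  have hdiff : 2 / D - (2 + b * c) / (D + d * c) = (2 * d / D - b) * c / (D + d * c) := by
    rw [div_sub_div _ _ hD.ne' hden.ne', div_sub' hD.ne', div_mul_eq_mul_div, div_div]
    ring
  have hcoef : e ≤ 2 * d / D - b := by
    have : 0 ≤ 2 * d / D := by positivity
    linarith
  rw [hdiff, abs_div, abs_mul, abs_mul, abs_of_nonneg (by positivity : 0 ≤ e / 2),
    abs_of_nonneg (he.trans hcoef), abs_of_pos hden, le_div_iff₀ hden]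
  have hc : 0 ≤ |c| := abs_nonneg c
  nlinarith [mul_le_mul_of_nonneg_right hcoef hc,
    mul_le_mul_of_nonneg_left hden2 (by positivity : 0 ≤ e / 2 * |c|)]

lemma one_sub_log_two_mem : 3 / 10 < 1 - log 2 ∧ 1 - log 2 < 1 := by
  have := log_two_lt_d9
  have := log_two_gt_d9
  constructor <;> linarith

lemma qDiff_denom_mem {k : ℕ} (hk : 2 ≤ k) (θ : ℝ) :
    0 < 1 - log 2 + ((k:ℝ) ^ 2)⁻¹ * (((2:ℝ) ^ (2 * k))⁻¹ + 1) * cos (k * θ) ∧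
      1 - log 2 + ((k:ℝ) ^ 2)⁻¹ * (((2:ℝ) ^ (2 * k))⁻¹ + 1) * cos (k * θ) ≤ 2 := by
  set d := ((k:ℝ) ^ 2)⁻¹ * (((2:ℝ) ^ (2 * k))⁻¹ + 1)
  have hd0 : 0 ≤ d := by positivity
  have hd : d ≤ (2 ^ 2)⁻¹ * ((2 ^ 4)⁻¹ + 1) := by
    have hk2 : ((k:ℝ) ^ 2)⁻¹ ≤ (2 ^ 2)⁻¹ :=
      inv_anti₀ (by norm_num) (by gcongr; exact_mod_cast hk)
    have hp : ((2:ℝ) ^ (2 * k))⁻¹ ≤ (2 ^ 4)⁻¹ :=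
      inv_anti₀ (by norm_num) (pow_le_pow_right₀ (by norm_num) (by omega))
    exact mul_le_mul hk2 (by linarith) (by positivity) (by positivity)
  have hcos := abs_le.1 (abs_cos_le_one (k * θ))
  have := one_sub_log_two_mem
  constructor <;>
    nlinarith [mul_le_mul_of_nonneg_left hcos.1 hd0, mul_le_mul_of_nonneg_left hcos.2 hd0]

lemma sqrt_pi_div_le_sqrt_integral_qDiff_sq {k : ℕ} (hk : 2 ≤ k) :
    √π / (2 * k) ≤ √(∫ θ in (0:ℝ)..(2 * π), qDiff k θ ^ 2) := by
  have hden := qDiff_denom_mem hk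
  have hcont : Continuous (qDiff k) := by
    unfold qDiff
    exact continuous_const.sub (Continuous.div (by fun_prop) (by fun_prop) fun θ => (hden θ).1.ne')
  have hb : (k:ℝ)⁻¹ ≤ -((k:ℝ)⁻¹ * (2 * ((2:ℝ) ^ (2 * k))⁻¹ - 2)) := by
    have hp : ((2:ℝ) ^ (2 * k))⁻¹ ≤ 2⁻¹ :=
      inv_anti₀ (by norm_num) (le_self_pow₀ (by norm_num) (by omega))
    have : 0 ≤ (k:ℝ)⁻¹ := by positivity
    nlinarith
  have hpt (θ : ℝ) : |(k:ℝ)⁻¹ / 2 * cos (k * θ)| ≤ |qDiff k θ| :=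
    abs_half_mul_le_abs_robin_diff (by linarith [one_sub_log_two_mem.1]) (hden θ).1 (hden θ).2
      (by positivity) (by positivity) hb
  calc √π / (2 * k) = |(k:ℝ)⁻¹ / 2| * √π := by
        rw [abs_of_nonneg (by positivity)]
        ring
    _ ≤ _ := abs_mul_sqrt_pi_le_sqrt_integral_sq hcont (by omega) hpt

lemma sqrt_integral_uDiff_sq {k : ℕ} (hk : k ≠ 0) :
    √(∫ θ in (0:ℝ)..(2 * π), uDiff k θ ^ 2) = 2 / (2 ^ k * k ^ 2) * √π := by
  have hk0 : (0:ℝ) < k := by positivity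
  simp_rw [uDiff, neg_sq]
  rw [sqrt_integral_const_mul_cos_sq hk, abs_of_pos (by positivity)]
  field_simp

/-- There is no constant `C > 0` with
`‖q - q_k‖_{L²(Γ₁)} ≤ C ‖u - u_k‖_{L²(Γ₂)}` for all `k ≥ 1`:
Lipschitz stability fails for recovering the Robin coefficient from
Dirichlet boundary data in the annulus counterexample. -/
theorem stmt10 :
    ¬ ∃ C : ℝ, 0 < C ∧ ∀ k : ℕ, 1 ≤ k →
      Real.sqrt (∫ θ in (0:ℝ)..(2 * π), (qDiff k θ) ^ 2)
        ≤ C * Real.sqrt (∫ θ in (0:ℝ)..(2 * π), (uDiff k θ) ^ 2) := by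
  rintro ⟨C, -, hbound⟩
  obtain ⟨k, hk⟩ := exists_nat_gt (max 2 (4 * C))
  have hk2 : 2 ≤ k := by exact_mod_cast (le_max_left _ _).trans hk.le
  have h := (sqrt_pi_div_le_sqrt_integral_qDiff_sq hk2).trans (hbound k (by omega))
  rw [sqrt_integral_uDiff_sq (by omega)] at h
  have hk0 : (0:ℝ) < k := by positivity
  have hgrowth : (2:ℝ) ^ k * k ≤ 4 * C := by
    rw [show C * (2 / (2 ^ k * k ^ 2) * √π) = 4 * C / (2 ^ k * k) * (√π / (2 * k)) by
      field_simp; ring] at h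
    have h1 := le_of_mul_le_mul_right ((one_mul _).trans_le h) (by positivity)
    rwa [le_div_iff₀ (by positivity), one_mul] at h1
  have hk_le : (k:ℝ) ≤ 2 ^ k * k := le_mul_of_one_le_left hk0.le (one_le_pow₀ (by norm_num))
  linarith [le_max_right 2 (4 * C)]
end
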